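/- Let A be a unital complex C*-algebra and let γ, D, H ∈ A be selfadjoint with γ² = 1, γ·D = −D·γ, γ·H = H·γ, H² = 1 and D·H = H·D. Let φ : ℝ → [0,1] be a localizing function, set Φ := φ(D), Φ₂ := φ₂(D) (where φ₂(x) := φ(x/2)), G := g(D) with g(x) := (1 − φ(x)⁴)^{1/2}·sgn(x) (a continuous function, since φ = 1 near 0), all via the continuous functional calculus, and set A₀ := Φ·H·Φ and C := (1 − Φ₂⁴)^{1/2}. Then for every t ∈ [0,1], with K_t := (1−t)^{1/2}·Φ₂·D·Φ₂ + t^{1/2}·G, one has (γ·(A₀ − C) + K_t)² ≥ t·1 in the order of selfadjoint elements; in particular γ·(A₀ − C) + K_t is invertible for every t ∈ (0,1]. -/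

import Mathlib

/-!
Write `S = A₀ − C`. Conjugation by the selfadjoint unitary `γ` is a ⋆-automorphism sending `D` to
`−D`, so `γ` commutes with even and anticommutes with odd functions of `D`; hence `γ` commutes
with `S` and anticommutes with `K_t`, and the cross terms of `(γS + K_t)²` cancel. With
`A₀C = 0 = CA₀` and `H² = 1` this leaves `Φ⁴ + C² + K_t²`, which is `f(D)` for
`f = φ⁴ + (1 − φ₂⁴) + k_t²`. Since `φ₂(x)²·x` and `g(x)` have the same sign,
`k_t² ≥ t·g² = t·(1 − φ⁴)`, so `f ≥ t + (1 − t)·φ⁴ ≥ t` pointwise.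
-/

open MeasureTheory

/-- The Fourier transform `φ̂(p) = (2π)^{-1/2} ∫ φ(x) e^{-ixp} dx` of a real function `φ`. -/
noncomputable def fourierHat (φ : ℝ → ℝ) (p : ℝ) : ℂ :=
  (Real.sqrt (2 * Real.pi) : ℂ)⁻¹ * ∫ x : ℝ, (φ x : ℂ) * Complex.exp (-(Complex.I * x * p))

/-- A localizing function: an even bounded continuous L¹-function `φ : ℝ → [0,1]` supported in
`[−1,1]`, equal to `1` on `[−1/2,1/2]`, nonincreasing on `[0,∞)`, with `p·φ̂(p)` integrable. -/
structure IsLocalizing (φ : ℝ → ℝ) : Prop where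
  continuous : Continuous φ
  even : ∀ x : ℝ, φ (-x) = φ x
  nonneg : ∀ x : ℝ, 0 ≤ φ x
  le_one : ∀ x : ℝ, φ x ≤ 1
  integrable : Integrable φ
  support : ∀ x : ℝ, 1 < |x| → φ x = 0
  eq_one : ∀ x : ℝ, |x| ≤ 1 / 2 → φ x = 1
  antitone : ∀ x₀ x₁ : ℝ, 0 ≤ x₀ → x₀ ≤ x₁ → φ x₁ ≤ φ x₀
  fourier_integrable : Integrable (fun p : ℝ => (p : ℂ) * fourierHat φ p)

open Filter Topology

lemma Real.continuousAt_sign_of_ne_zero {x : ℝ} (hx : x ≠ 0) : ContinuousAt Real.sign x := by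
  rcases hx.lt_or_gt with hx | hx
  · exact continuousAt_const.congr <|
      (eventually_lt_nhds hx).mono fun y hy => (Real.sign_of_neg hy).symm
  · exact continuousAt_const.congr <|
      (eventually_gt_nhds hx).mono fun y hy => (Real.sign_of_pos hy).symm

lemma Continuous.mul_sign_of_eventuallyEq_zero {f : ℝ → ℝ} (hf : Continuous f)
    (h0 : f =ᶠ[𝓝 0] 0) : Continuous fun x => f x * Real.sign x := by
  refine continuous_iff_continuousAt.2 fun x => ?_
  rcases eq_or_ne x 0 with rfl | hx
  · exact EventuallyEq.continuousAt (y := 0) <| h0.mono fun y hy => by simp [hy]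
  · exact hf.continuousAt.mul (Real.continuousAt_sign_of_ne_zero hx)

lemma mul_sq_le_sq_sqrt_one_sub_mul_add_sqrt_mul {t a b : ℝ} (ht : 0 ≤ t) (hab : 0 ≤ a * b) :
    t * b ^ 2 ≤ (√(1 - t) * a + √t * b) ^ 2 := by
  have hcross : 0 ≤ 2 * (√(1 - t) * √t) * (a * b) := by positivity
  nlinarith [sq_nonneg (√(1 - t) * a), Real.sq_sqrt ht]

noncomputable def signedComplement (φ : ℝ → ℝ) (x : ℝ) : ℝ := √(1 - φ x ^ 4) * Real.sign x

/-- `K_t = k_t(D)` for the symbol `k_t = homotopySymbol φ t`. -/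
noncomputable def homotopySymbol (φ : ℝ → ℝ) (t x : ℝ) : ℝ :=
  √(1 - t) * (φ (x / 2) * x * φ (x / 2)) + √t * signedComplement φ x

namespace IsLocalizing

variable {φ : ℝ → ℝ}

lemma pow_four_le_one (hφ : IsLocalizing φ) (x : ℝ) : φ x ^ 4 ≤ 1 :=
  pow_le_one₀ (hφ.nonneg x) (hφ.le_one x)

lemma continuous_signedComplement (hφ : IsLocalizing φ) : Continuous (signedComplement φ) := by
  refine ((continuous_const.sub (hφ.continuous.pow 4)).sqrt).mul_sign_of_eventuallyEq_zero ?_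
  filter_upwards [Metric.closedBall_mem_nhds (0 : ℝ) (by norm_num : (0 : ℝ) < 1 / 2)] with x hx
  rw [Metric.mem_closedBall, Real.dist_eq, sub_zero] at hx
  simp [hφ.eq_one x hx]

lemma signedComplement_neg (hφ : IsLocalizing φ) (x : ℝ) :
    signedComplement φ (-x) = -signedComplement φ x := by
  simp [signedComplement, hφ.even, Real.sign_neg]

lemma signedComplement_sq (hφ : IsLocalizing φ) (x : ℝ) :
    signedComplement φ x ^ 2 = 1 - φ x ^ 4 := by
  rcases eq_or_ne x 0 with rfl | hx
  · simp [signedComplement, hφ.eq_one 0 (by norm_num)]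
  · have hsign : Real.sign x ^ 2 = 1 := by
      rcases Real.sign_apply_eq_of_ne_zero x hx with h | h <;> simp [h]
    rw [signedComplement, mul_pow, hsign, mul_one,
      Real.sq_sqrt (sub_nonneg.2 (hφ.pow_four_le_one x))]

/-- Holds because `φ₂ = 1` on `[−1,1] ⊇ supp φ`. -/
lemma mul_sqrt_one_sub_half_pow_four (hφ : IsLocalizing φ) (x : ℝ) :
    φ x * √(1 - φ (x / 2) ^ 4) = 0 := by
  rcases le_or_gt |x| 1 with hx | hx
  · have : |x / 2| ≤ 1 / 2 := by rw [abs_div, abs_two]; linarith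
    simp [hφ.eq_one _ this]
  · simp [hφ.support x hx]

lemma continuous_homotopySymbol (hφ : IsLocalizing φ) (t : ℝ) :
    Continuous (homotopySymbol φ t) := by
  have hφ₂ : Continuous fun x => φ (x / 2) := hφ.continuous.comp (continuous_id.div_const 2)
  exact (continuous_const.mul ((hφ₂.mul continuous_id).mul hφ₂)).add
    (continuous_const.mul hφ.continuous_signedComplement)

lemma homotopySymbol_neg (hφ : IsLocalizing φ) (t x : ℝ) :
    homotopySymbol φ t (-x) = -homotopySymbol φ t x := by
  simp only [homotopySymbol, neg_div, hφ.even, hφ.signedComplement_neg]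
  ring

lemma le_pow_four_add_sq_add_sq (hφ : IsLocalizing φ) {t : ℝ} (ht₀ : 0 ≤ t) (ht₁ : t ≤ 1)
    (x : ℝ) : t ≤ φ x ^ 4 + √(1 - φ (x / 2) ^ 4) ^ 2 + homotopySymbol φ t x ^ 2 := by
  have hpg : 0 ≤ φ (x / 2) * x * φ (x / 2) * signedComplement φ x := by
    have hsign := Real.sign_mul_nonneg x
    have hrw : φ (x / 2) * x * φ (x / 2) * signedComplement φ x
        = φ (x / 2) ^ 2 * √(1 - φ x ^ 4) * (Real.sign x * x) := by
      rw [signedComplement]; ring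
    rw [hrw]; positivity
  have hk := mul_sq_le_sq_sqrt_one_sub_mul_add_sqrt_mul ht₀ hpg
  rw [hφ.signedComplement_sq] at hk
  rw [homotopySymbol, Real.sq_sqrt (by linarith [hφ.pow_four_le_one (x / 2)])]
  nlinarith [hφ.pow_four_le_one (x / 2), pow_nonneg (hφ.nonneg x) 4]

end IsLocalizing

lemma sq_mul_add_of_anticommute {R : Type*} [Ring R] {γ s k : R} (hγ : γ ^ 2 = 1)
    (hγs : Commute γ s) (hγk : γ * k = -(k * γ)) (hsk : Commute s k) :
    (γ * s + k) ^ 2 = s ^ 2 + k ^ 2 := by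
  have hkγ : k * γ = -(γ * k) := by rw [hγk, neg_neg]
  have hss : γ * s * (γ * s) = s ^ 2 := by
    rw [mul_assoc, ← mul_assoc s, ← hγs.eq, ← mul_assoc, ← mul_assoc, ← sq, hγ, one_mul, sq]
  have hks : k * (γ * s) = -(γ * s * k) := by
    rw [← mul_assoc, hkγ, neg_mul, mul_assoc, ← hsk.eq, mul_assoc]
  rw [sq, add_mul, mul_add, mul_add, hss, hks, ← sq]
  abel

section Conjugation

variable {A : Type*} [CStarAlgebra A] {γ a : A}

lemma conj_cfc_eq_cfc_neg (hγ : IsSelfAdjoint γ) (hγ2 : γ ^ 2 = 1) (ha : IsSelfAdjoint a)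
    (hγa : γ * a = -(a * γ)) {f : ℝ → ℝ} (hf : Continuous f) :
    γ * cfc f a * γ = cfc (fun x => f (-x)) a := by
  have hγγ : γ * γ = 1 := by rw [← sq, hγ2]
  let u : unitary A := ⟨γ, Unitary.mem_iff.2 ⟨by rw [hγ.star_eq, hγγ], by rw [hγ.star_eq, hγγ]⟩⟩
  have hconj : ∀ b, Unitary.conjStarAlgAut ℝ A u b = γ * b * γ := fun b => by
    rw [Unitary.conjStarAlgAut_apply, hγ.star_eq]
  have hγaγ : γ * a * γ = -a := by rw [hγa, neg_mul, mul_assoc, hγγ, mul_one]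
  have hcont : Continuous (Unitary.conjStarAlgAut ℝ A u) := by
    rw [show ⇑(Unitary.conjStarAlgAut ℝ A u) = fun b => γ * b * γ from funext hconj]
    fun_prop
  have hmap := StarAlgHomClass.map_cfc (S := ℝ) (Unitary.conjStarAlgAut ℝ A u) f a (hφ := hcont)
    (hφa := by rw [hconj, hγaγ]; exact ha.neg)
  rw [hconj, hconj, hγaγ] at hmap
  rw [hmap, cfc_comp_neg f a]

lemma commute_cfc_of_even (hγ : IsSelfAdjoint γ) (hγ2 : γ ^ 2 = 1) (ha : IsSelfAdjoint a)
    (hγa : γ * a = -(a * γ)) {f : ℝ → ℝ} (hf : Continuous f) (hf_even : ∀ x, f (-x) = f x) :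
    Commute γ (cfc f a) := by
  have h := conj_cfc_eq_cfc_neg hγ hγ2 ha hγa hf
  simp only [hf_even] at h
  calc γ * cfc f a = γ * cfc f a * γ * γ := by rw [mul_assoc _ γ, ← sq, hγ2, mul_one]
    _ = cfc f a * γ := by rw [h]

lemma mul_cfc_of_odd (hγ : IsSelfAdjoint γ) (hγ2 : γ ^ 2 = 1) (ha : IsSelfAdjoint a)
    (hγa : γ * a = -(a * γ)) {f : ℝ → ℝ} (hf : Continuous f) (hf_odd : ∀ x, f (-x) = -f x) :
    γ * cfc f a = -(cfc f a * γ) := by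
  have h := conj_cfc_eq_cfc_neg hγ hγ2 ha hγa hf
  simp only [hf_odd, cfc_neg] at h
  calc γ * cfc f a = γ * cfc f a * γ * γ := by rw [mul_assoc _ γ, ← sq, hγ2, mul_one]
    _ = -(cfc f a * γ) := by rw [h, neg_mul]

end Conjugation

section FunctionalCalculus

variable {A : Type*} [CStarAlgebra A]

lemma cfc_mul_self_mul_cfc {a : A} (ha : IsSelfAdjoint a) {f : ℝ → ℝ} (hf : Continuous f) :
    cfc f a * a * cfc f a = cfc (fun x => f x * x * f x) a := by
  rw [cfc_mul (fun x => f x * x) f a, cfc_mul f (fun x => x) a, cfc_id' ℝ a]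

lemma sq_conj_sub_add_eq_cfc {γ D H : A} (hγ : IsSelfAdjoint γ) (hD : IsSelfAdjoint D)
    (hγ2 : γ ^ 2 = 1) (hγD : γ * D = -(D * γ)) (hγH : γ * H = H * γ) (hH2 : H ^ 2 = 1)
    (hDH : D * H = H * D) {f c k : ℝ → ℝ} (hf : Continuous f) (hc : Continuous c)
    (hk : Continuous k) (hf_even : ∀ x, f (-x) = f x) (hc_even : ∀ x, c (-x) = c x)
    (hk_odd : ∀ x, k (-x) = -k x) (hfc : ∀ x, f x * c x = 0) :
    (γ * (cfc f D * H * cfc f D - cfc c D) + cfc k D) ^ 2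
      = cfc (fun x => f x ^ 4 + c x ^ 2 + k x ^ 2) D := by
  set Φ := cfc f D
  set C := cfc c D
  set K := cfc k D
  have hHΦ : Commute H Φ := (Commute.cfc_real hDH f).symm
  have hγΦ : Commute γ Φ := commute_cfc_of_even hγ hγ2 hD hγD hf hf_even
  have hΦC : Φ * C = 0 := by
    rw [← cfc_mul f c D, funext hfc, cfc_const_zero]
  have hCΦ : C * Φ = 0 := by rw [← (cfc_commute_cfc f c D).eq, hΦC]
  have hA₀ : Φ * H * Φ = H * Φ ^ 2 := by rw [← hHΦ.eq, mul_assoc, sq]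
  have hS : (Φ * H * Φ - C) ^ 2 = Φ ^ 4 + C ^ 2 := by
    have hA₀C : Φ * H * Φ * C = 0 := by rw [mul_assoc, hΦC, mul_zero]
    have hCA₀ : C * (Φ * H * Φ) = 0 := by rw [← mul_assoc, ← mul_assoc, hCΦ, zero_mul, zero_mul]
    rw [sq, sub_mul, mul_sub, mul_sub, hA₀C, hCA₀, sub_zero, zero_sub, sub_neg_eq_add,
      ← sq, ← sq, hA₀, (hHΦ.pow_right 2).mul_pow, hH2, one_mul, ← pow_mul]
  have hγS : Commute γ (Φ * H * Φ - C) :=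
    ((hγΦ.mul_right hγH).mul_right hγΦ).sub_right
      (commute_cfc_of_even hγ hγ2 hD hγD hc hc_even)
  have hSK : Commute (Φ * H * Φ - C) K :=
    (((cfc_commute_cfc f k D).mul_left (Commute.cfc_real hDH k).symm).mul_left
      (cfc_commute_cfc f k D)).sub_left (cfc_commute_cfc c k D)
  rw [sq_mul_add_of_anticommute hγ2 hγS (mul_cfc_of_odd hγ hγ2 hD hγD hk hk_odd) hSK, hS,
    ← cfc_pow f 4 D, ← cfc_pow c 2 D, ← cfc_pow k 2 D,
    ← cfc_add D (fun x => f x ^ 4) (fun x => c x ^ 2),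
    ← cfc_add D (fun x => f x ^ 4 + c x ^ 2) (fun x => k x ^ 2)]

lemma CFC.sqrt_cfc {a : A} [PartialOrder A] [StarOrderedRing A]
    {f : ℝ → ℝ} (hf : Continuous f) (hf_nonneg : ∀ x, 0 ≤ f x) :
    CFC.sqrt (cfc f a) = cfc (fun x => √(f x)) a := by
  refine CFC.sqrt_unique ?_ (cfc_nonneg fun x _ => Real.sqrt_nonneg _)
  rw [← cfc_mul (fun x => √(f x)) (fun x => √(f x)) a]
  exact cfc_congr fun x _ => Real.mul_self_sqrt (hf_nonneg x)

lemma isUnit_of_smul_one_le_sq [PartialOrder A] [StarOrderedRing A] {b : A} {t : ℝ}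
    (ht : 0 < t) (h : t • (1 : A) ≤ b ^ 2) : IsUnit b :=
  (isUnit_pow_iff two_ne_zero).1 <|
    CStarAlgebra.isUnit_of_le _ h (isStrictlyPositive_one.smul ht)

end FunctionalCalculus

namespace IsLocalizing

variable {A : Type*} [CStarAlgebra A] {φ : ℝ → ℝ} {a : A}

lemma sqrt_one_sub_cfc_half_pow_four [PartialOrder A] [StarOrderedRing A]
    (hφ : IsLocalizing φ) (ha : IsSelfAdjoint a) :
    CFC.sqrt (1 - cfc (fun x => φ (x / 2)) a ^ 4) = cfc (fun x => √(1 - φ (x / 2) ^ 4)) a := by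
  have hφ₂ : Continuous fun x => φ (x / 2) := hφ.continuous.comp (continuous_id.div_const 2)
  rw [← cfc_pow _ 4 a hφ₂.continuousOn, ← cfc_const_one ℝ a,
    ← cfc_sub (fun _ => (1 : ℝ)) (fun x => φ (x / 2) ^ 4) a continuousOn_const
      (hφ₂.pow 4).continuousOn]
  exact CFC.sqrt_cfc (continuous_const.sub (hφ₂.pow 4))
    fun x => sub_nonneg.2 (hφ.pow_four_le_one _)

lemma cfc_homotopySymbol (hφ : IsLocalizing φ) (ha : IsSelfAdjoint a) (t : ℝ) :
    √(1 - t) • (cfc (fun x => φ (x / 2)) a * a * cfc (fun x => φ (x / 2)) a)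
      + √t • cfc (signedComplement φ) a = cfc (homotopySymbol φ t) a := by
  have hφ₂ : Continuous fun x => φ (x / 2) := hφ.continuous.comp (continuous_id.div_const 2)
  have hp : Continuous fun x => φ (x / 2) * x * φ (x / 2) := (hφ₂.mul continuous_id).mul hφ₂
  have hg := hφ.continuous_signedComplement
  rw [cfc_mul_self_mul_cfc ha hφ₂, ← cfc_const_mul _ _ a hp.continuousOn,
    ← cfc_const_mul _ _ a hg.continuousOn,
    ← cfc_add a (fun x => √(1 - t) * (φ (x / 2) * x * φ (x / 2)))
      (fun x => √t * signedComplement φ x) (continuous_const.mul hp).continuousOn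
      (continuous_const.mul hg).continuousOn]
  rfl

end IsLocalizing

theorem localizer_homotopy_sq_ge_general
    {A : Type*} [CStarAlgebra A] [PartialOrder A] [StarOrderedRing A]
    (γ D H : A) (hγ : IsSelfAdjoint γ) (hD : IsSelfAdjoint D)
    (hγ2 : γ ^ 2 = 1) (hγD : γ * D = -(D * γ)) (hγH : γ * H = H * γ)
    (hH2 : H ^ 2 = 1) (hDH : D * H = H * D)
    (φ : ℝ → ℝ) (hφ : IsLocalizing φ)
    (Φ Φ₂ G A₀ C : A)
    (hΦ : Φ = cfc φ D)
    (hΦ₂ : Φ₂ = cfc (fun x : ℝ => φ (x / 2)) D)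
    (hG : G = cfc (fun x : ℝ => Real.sqrt (1 - φ x ^ 4) * Real.sign x) D)
    (hA₀ : A₀ = Φ * H * Φ)
    (hC : C = CFC.sqrt (1 - Φ₂ ^ 4)) :
    (∀ t ∈ Set.Icc (0:ℝ) 1,
      t • (1 : A)
        ≤ (γ * (A₀ - C) + (Real.sqrt (1 - t) • (Φ₂ * D * Φ₂) + Real.sqrt t • G)) ^ 2) ∧
    (∀ t ∈ Set.Ioc (0:ℝ) 1,
      IsUnit (γ * (A₀ - C) + (Real.sqrt (1 - t) • (Φ₂ * D * Φ₂) + Real.sqrt t • G))) := by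
  have hf := hφ.continuous
  have hc : Continuous fun x => √(1 - φ (x / 2) ^ 4) := by fun_prop
  have hsq_ge : ∀ t ∈ Set.Icc (0:ℝ) 1, t • (1 : A)
      ≤ (γ * (A₀ - C) + (√(1 - t) • (Φ₂ * D * Φ₂) + √t • G)) ^ 2 := by
    rintro t ⟨ht₀, ht₁⟩
    have hk := hφ.continuous_homotopySymbol t
    rw [hA₀, hΦ, hC, hΦ₂, show G = cfc (signedComplement φ) D from hG,
      hφ.sqrt_one_sub_cfc_half_pow_four hD, hφ.cfc_homotopySymbol hD t,
      sq_conj_sub_add_eq_cfc hγ hD hγ2 hγD hγH hH2 hDH hf hc hk hφ.even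
        (fun x => by simp only [neg_div, hφ.even]) (hφ.homotopySymbol_neg t)
        hφ.mul_sqrt_one_sub_half_pow_four,
      ← Algebra.algebraMap_eq_smul_one]
    exact algebraMap_le_cfc _ _ _ fun x _ => hφ.le_pow_four_add_sq_add_sq ht₀ ht₁ x
  exact ⟨hsq_ge, fun t ht =>
    isUnit_of_smul_one_le_sq ht.1 (hsq_ge t (Set.Ioc_subset_Icc_self ht))⟩

/-- **the key inequality in the zero-commutator case.** Assume `γ, D, H` are
selfadjoint with `γ² = 1`, `γD = −Dγ`, `γH = Hγ`, `H² = 1` and `DH = HD`. With `Φ = φ(D)`,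
`Φ₂ = φ₂(D)`, `G = g(D)` for `g(x) = (1 − φ(x)⁴)^{1/2}·sgn(x)`, `A₀ = ΦHΦ`,
`C = (1 − Φ₂⁴)^{1/2}` and `K_t = (1−t)^{1/2}Φ₂DΦ₂ + t^{1/2}G`, one has
`(γ(A₀ − C) + K_t)² ≥ t·1` for all `t ∈ [0,1]`; in particular `γ(A₀ − C) + K_t` is invertible
for `t ∈ (0,1]`. -/
theorem localizer_homotopy_sq_ge
    {A : Type*} [CStarAlgebra A] [PartialOrder A] [StarOrderedRing A]
    (γ D H : A) (hγ : IsSelfAdjoint γ) (hD : IsSelfAdjoint D) (hH : IsSelfAdjoint H)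
    (hγ2 : γ ^ 2 = 1) (hγD : γ * D = -(D * γ)) (hγH : γ * H = H * γ)
    (hH2 : H ^ 2 = 1) (hDH : D * H = H * D)
    (φ : ℝ → ℝ) (hφ : IsLocalizing φ)
    (Φ Φ₂ G A₀ C : A)
    (hΦ : Φ = cfc φ D)
    (hΦ₂ : Φ₂ = cfc (fun x : ℝ => φ (x / 2)) D)
    (hG : G = cfc (fun x : ℝ => Real.sqrt (1 - φ x ^ 4) * Real.sign x) D)
    (hA₀ : A₀ = Φ * H * Φ)
    (hC : C = CFC.sqrt (1 - Φ₂ ^ 4)) :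
    (∀ t ∈ Set.Icc (0:ℝ) 1,
      t • (1 : A)
        ≤ (γ * (A₀ - C) + (Real.sqrt (1 - t) • (Φ₂ * D * Φ₂) + Real.sqrt t • G)) ^ 2) ∧
    (∀ t ∈ Set.Ioc (0:ℝ) 1,
      IsUnit (γ * (A₀ - C) + (Real.sqrt (1 - t) • (Φ₂ * D * Φ₂) + Real.sqrt t • G))) :=
  localizer_homotopy_sq_ge_general γ D H hγ hD hγ2 hγD hγH hH2 hDH φ hφ Φ Φ₂ G A₀ C hΦ hΦ₂ hG hA₀ hC
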